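/- For each r ≥ 1, the block matrix M^(r) of size C(r+1,2), whose (a,b)-block (for 1 ≤ a,b ≤ r, with row-block a of height r+1-a and column-block b of width r+1-b) is the Toeplitz matrix with entries f_{a-b}(i,j), is a fooling-set matrix: all diagonal entries equal 1 and M^(r)_{ij}·M^(r)_{ji} = 0 for i ≠ j. -/

import Mathlib

/-- Generalized binomial coefficient `C(n,k)` for integers, zero when `k < 0`. -/
noncomputable def genChoose (n k : ℤ) : ℤ :=
  if k < 0 then 0 else Ring.choose n k.toNat

/-- The function `f_t(i,j)` from the characteristic-zero construction. -/
noncomputable def ft (t : ℤ) (i j : ℕ) : ℤ :=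
  if 0 < t then genChoose (t - 1) ((j : ℤ) - i - 1)
  else if i < j then (-1) ^ (j - i) * genChoose (-t - 1 + j - i) (-t - 1)
  else (-1) ^ ((i : ℤ) - j - t).toNat * genChoose ((i : ℤ) - j - 1) (-t)

/-- The block fooling-set matrix `M^(r)` over `ℚ`: block `(a,b)` (0-indexed here,
so `a,b ∈ {0,…,r-1}` correspond to `a+1,b+1` in 1-indexed notation) has height
`r - a` and width `r - b`, with entries `f_{a-b}(i,j)` (1-indexed `i,j`). -/
noncomputable def Mr (r : ℕ) :
    Matrix ((a : Fin r) × Fin (r - a.val)) ((a : Fin r) × Fin (r - a.val)) ℚ :=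
  fun x y => (ft ((x.1 : ℤ) - (y.1 : ℤ)) (x.2.val + 1) (y.2.val + 1) : ℚ)

/-
For `t > 0` the function `f_t(i, ·)` is supported on `i < j ≤ i + t`, while `f_{-t}(j, i)` with
`i < j` is `± C(j - i - 1, t)`, which vanishes on exactly that range;
so `f_t(i,j) f_{-t}(j,i) = 0`. For `t = 0`, `f_0` is lower unitriangular. The entries
`M_{xy}` and `M_{yx}` are such a pair `f_t(i,j)`, `f_{-t}(j,i)` with `t = a - b`.
-/

lemma genChoose_of_neg (n : ℤ) {k : ℤ} (hk : k < 0) : genChoose n k = 0 := by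
  simp [genChoose, hk]

lemma genChoose_zero_right (n : ℤ) : genChoose n 0 = 1 := by
  simp [genChoose]

lemma genChoose_natCast_of_lt {n k : ℕ} (h : n < k) : genChoose n k = 0 := by
  simp [genChoose, Ring.choose_natCast, Nat.choose_eq_zero_of_lt h]

lemma ft_zero_self (i : ℕ) : ft 0 i i = 1 := by
  simp [ft, genChoose_zero_right]

lemma ft_zero_of_lt {i j : ℕ} (h : i < j) : ft 0 i j = 0 := by
  rw [ft, if_neg (lt_irrefl 0), if_pos h, genChoose_of_neg _ (by omega), mul_zero]

lemma ft_of_pos_of_le {t : ℤ} (ht : 0 < t) {i j : ℕ} (h : j ≤ i) : ft t i j = 0 := by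
  rw [ft, if_pos ht, genChoose_of_neg _ (by omega)]

lemma ft_of_pos_of_lt_sub {t : ℤ} (ht : 0 < t) {i j : ℕ} (h : t < (j : ℤ) - i) : ft t i j = 0 := by
  obtain ⟨m, rfl⟩ : ∃ m : ℕ, t = m + 1 := ⟨(t - 1).toNat, by omega⟩
  obtain ⟨d, hd⟩ : ∃ d : ℕ, (j : ℤ) - i - 1 = d := ⟨(j - i - 1 : ℤ).toNat, by omega⟩
  rw [ft, if_pos ht, hd, add_sub_cancel_right, genChoose_natCast_of_lt (by omega)]

lemma ft_neg_of_lt_of_le {t : ℤ} {i j : ℕ} (hij : i < j) (h : (j : ℤ) - i ≤ t) :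
    ft (-t) j i = 0 := by
  obtain ⟨m, rfl⟩ : ∃ m : ℕ, t = m := ⟨t.toNat, by omega⟩
  obtain ⟨d, hd⟩ : ∃ d : ℕ, (j : ℤ) - i - 1 = d := ⟨(j - i - 1 : ℤ).toNat, by omega⟩
  rw [ft, if_neg (by omega), if_neg (by omega), neg_neg, hd, genChoose_natCast_of_lt (by omega),
    mul_zero]

lemma ft_mul_ft_neg_of_pos {t : ℤ} (ht : 0 < t) (i j : ℕ) : ft t i j * ft (-t) j i = 0 := by
  by_cases hji : j ≤ i
  · rw [ft_of_pos_of_le ht hji, zero_mul]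
  by_cases hjt : (j : ℤ) - i ≤ t
  · rw [ft_neg_of_lt_of_le (by omega) hjt, mul_zero]
  · rw [ft_of_pos_of_lt_sub ht (by omega), zero_mul]

lemma ft_mul_ft_neg_eq_zero {t : ℤ} {i j : ℕ} (h : t ≠ 0 ∨ i ≠ j) :
    ft t i j * ft (-t) j i = 0 := by
  rcases lt_trichotomy t 0 with ht | rfl | ht
  · simpa [mul_comm] using ft_mul_ft_neg_of_pos (neg_pos.2 ht) j i
  · rcases lt_or_gt_of_ne (h.resolve_left (not_not.2 rfl)) with hij | hij
    · rw [ft_zero_of_lt hij, zero_mul]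
    · rw [neg_zero, ft_zero_of_lt hij, mul_zero]
  · exact ft_mul_ft_neg_of_pos ht i j

theorem Mr_fooling_general (r : ℕ) :
    (∀ x, Mr r x x = 1) ∧ (∀ x y, x ≠ y → Mr r x y * Mr r y x = 0) := by
  refine ⟨fun x => by simp [Mr, ft_zero_self], ?_⟩
  rintro ⟨a, i⟩ ⟨b, j⟩ hxy
  have hne : (a : ℤ) - b ≠ 0 ∨ i.val + 1 ≠ j.val + 1 := by
    by_contra! h
    obtain rfl : a = b := Fin.ext (by omega)
    obtain rfl : i = j := Fin.ext (by omega)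
    exact hxy rfl
  have hneg : (b : ℤ) - a = -((a : ℤ) - b) := by ring
  simp only [Mr, hneg]
  exact_mod_cast ft_mul_ft_neg_eq_zero hne

theorem Mr_fooling (r : ℕ) (hr : 1 ≤ r) :
    (∀ x, Mr r x x = 1) ∧ (∀ x y, x ≠ y → Mr r x y * Mr r y x = 0) :=
  Mr_fooling_general r
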